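/- arXiv:cond-mat/0602115 — 4 statements merged into one kernel-verified Lean document; each statement's English description precedes it below -/
import Mathlib

section
/- Let A be a Hopf algebra, Π_φ a representation on V, φ₀ ∈ V, and T_r = {a ∈ A : (id ⊗ Π_φ)(Δ(a))(1 ⊗ φ₀) = a ⊗ φ₀}. Then Δ(T_r) ⊆ A ⊗ T_r, i.e. for every a ∈ T_r, writing Δ(a) = Σ a⁽¹⁾ ⊗ a⁽²⁾, the right tensor legs a⁽²⁾ can be taken to lie in T_r. -/
open TensorProduct

/-- The linear map `a ↦ π a v` given a representation `π` and a fixed vector `v`. -/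
noncomputable def actOn {A V : Type*} [Ring A] [HopfAlgebra ℂ A]
    [AddCommGroup V] [Module ℂ V] (π : A →ₐ[ℂ] Module.End ℂ V) (v : V) : A →ₗ[ℂ] V where
  toFun a := π a v
  map_add' a b := by simp
  map_smul' c a := by simp

/-- The right residual symmetry algebra
`T_r = {a ∈ A : (id ⊗ Π_φ)(Δ(a))(1 ⊗ φ₀) = a ⊗ φ₀}`. -/
noncomputable def rightResidual {A V : Type*} [Ring A] [HopfAlgebra ℂ A]
    [AddCommGroup V] [Module ℂ V] (π : A →ₐ[ℂ] Module.End ℂ V) (φ₀ : V) : Set A :=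
  {a : A | TensorProduct.map LinearMap.id (actOn π φ₀) (Coalgebra.comul a) = a ⊗ₜ[ℂ] φ₀}

/-- The left residual symmetry algebra
`T_l = {a ∈ A : (Π_φ ⊗ id)(Δ(a))(φ₀ ⊗ 1) = φ₀ ⊗ a}`. -/
noncomputable def leftResidual {A V : Type*} [Ring A] [HopfAlgebra ℂ A]
    [AddCommGroup V] [Module ℂ V] (π : A →ₐ[ℂ] Module.End ℂ V) (φ₀ : V) : Set A :=
  {a : A | TensorProduct.map (actOn π φ₀) LinearMap.id (Coalgebra.comul a) = φ₀ ⊗ₜ[ℂ] a}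

/-- `Δ(T_r) ⊆ A ⊗ T_r`: for `a ∈ T_r`, `Δ(a)` lies in the span of pure tensors
whose right leg lies in `T_r`. -/
theorem stmt1 {A V : Type*} [Ring A] [HopfAlgebra ℂ A]
    [AddCommGroup V] [Module ℂ V]
    (π : A →ₐ[ℂ] Module.End ℂ V) (φ₀ : V) :
    ∀ a ∈ rightResidual π φ₀,
      Coalgebra.comul (R := ℂ) a ∈ Submodule.span ℂ
        {t : A ⊗[ℂ] A | ∃ x y, y ∈ rightResidual π φ₀ ∧ t = x ⊗ₜ[ℂ] y} := by
  intro a ha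
  set L : A →ₗ[ℂ] A ⊗[ℂ] V :=
    (TensorProduct.map LinearMap.id (actOn π φ₀)) ∘ₗ Coalgebra.comul
      - (TensorProduct.mk ℂ A V).flip φ₀ with hL
  have hmem : ∀ b : A, b ∈ rightResidual π φ₀ ↔ L b = 0 := by
    intro b
    simp [hL, rightResidual, sub_eq_zero]
  have hmap : TensorProduct.map (LinearMap.id (R := ℂ) (M := A)) (actOn π φ₀)
      = (actOn π φ₀).lTensor A := rfl
  -- key: (id ⊗ L)(Δ a) = 0
  have key : L.lTensor A (Coalgebra.comul a) = 0 := by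
    have h1 : ((TensorProduct.map (LinearMap.id (R := ℂ) (M := A)) (actOn π φ₀))
          ∘ₗ Coalgebra.comul).lTensor A (Coalgebra.comul a)
        = TensorProduct.assoc ℂ A A V ((Coalgebra.comul (R := ℂ) a) ⊗ₜ[ℂ] φ₀) := by
      rw [LinearMap.lTensor_comp, LinearMap.comp_apply, hmap, ← Coalgebra.coassoc_apply]
      have h2 : ((actOn π φ₀).lTensor A).lTensor A ∘ₗ (TensorProduct.assoc ℂ A A A).toLinearMap
          = (TensorProduct.assoc ℂ A A V).toLinearMap ∘ₗ (actOn π φ₀).lTensor (A ⊗[ℂ] A) := by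
        ext x y z
        simp
      have h2' := LinearMap.congr_fun h2 ((Coalgebra.comul (R := ℂ)).rTensor A (Coalgebra.comul a))
      simp only [LinearMap.comp_apply, LinearEquiv.coe_coe] at h2'
      rw [h2']
      congr 1
      have h3 : (actOn π φ₀).lTensor (A ⊗[ℂ] A) ∘ₗ (Coalgebra.comul (R := ℂ) (A := A)).rTensor A
          = (Coalgebra.comul (R := ℂ) (A := A)).rTensor V ∘ₗ (actOn π φ₀).lTensor A := by
        ext x y
        simp
      have h3' := LinearMap.congr_fun h3 (Coalgebra.comul (R := ℂ) a)
      simp only [LinearMap.comp_apply] at h3'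
      rw [h3', ← hmap, ha]
      simp
    have h2 : (((TensorProduct.mk ℂ A V).flip φ₀).lTensor A) (Coalgebra.comul a)
        = TensorProduct.assoc ℂ A A V ((Coalgebra.comul (R := ℂ) a) ⊗ₜ[ℂ] φ₀) := by
      induction (Coalgebra.comul (R := ℂ) a) using TensorProduct.induction_on with
      | zero => simp
      | tmul x y => simp [TensorProduct.mk]
      | add u v hu hv => simp [tmul_add, add_tmul, hu, hv]
    rw [hL, LinearMap.lTensor_sub, LinearMap.sub_apply, h1, h2, sub_self]
  -- exactness
  have hex := Module.Flat.lTensor_exact (R := ℂ) A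
    (LinearMap.exact_subtype_ker_map L)
  obtain ⟨t, ht⟩ := (hex _).mp key
  rw [← ht]
  clear ht key ha
  induction t using TensorProduct.induction_on with
  | zero => simp
  | tmul x y =>
    apply Submodule.subset_span
    exact ⟨x, y.1, (hmem y.1).mpr y.2, by simp⟩
  | add u v hu hv => rw [map_add]; exact Submodule.add_mem _ hu hv
end

section
/- Let A be a finite-dimensional Hopf algebra whose antipode S satisfies S² = id, with representation Π_φ on V and vector φ₀ ∈ V. Let T_r = {a : (id ⊗ Π_φ)(Δ(a))(1 ⊗ φ₀) = a ⊗ φ₀} and T_l = {a : (Π_φ ⊗ id)(Δ(a))(φ₀ ⊗ 1) = φ₀ ⊗ a}. Then S(T_l) = T_r and S(T_r) = T_l. -/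
/-!
`T_r` is the set of `a` for which `a ⊗ φ₀` is fixed by the fusion map `x ⊗ v ↦ ∑ x₁ ⊗ π(x₂) v`
on `A ⊗ V`. This map has the left inverse `x ⊗ v ↦ ∑ x₁ ⊗ π(S x₂) v`, so every `a ∈ T_r` also
satisfies `∑ a₁ ⊗ π(S a₂) φ₀ = a ⊗ φ₀`. Applying `S ⊗ id` and swapping the factors gives
`∑ π(S a₂) φ₀ ⊗ S a₁ = φ₀ ⊗ S a`, which says `S a ∈ T_l` because `Δ ∘ S = (S ⊗ S) ∘ Δᵒᵖ`.
The mirror argument for `T_l` uses the fusion map `v ⊗ x ↦ ∑ π(x₁) v ⊗ x₂`; its left inverse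
`v ⊗ x ↦ ∑ π(S x₁) v ⊗ x₂` needs `∑ S(x₂) x₁ = ε(x)`, which is where `S² = id` enters.
As `S` is an involution, the inclusions `S(T_r) ⊆ T_l` and `S(T_l) ⊆ T_r` are equalities.
-/

open TensorProduct

open TensorProduct Coalgebra HopfAlgebra WithConv

lemma Coalgebra.sum_counit_right_smul {R C ι : Type*} [CommSemiring R] [AddCommMonoid C]
    [Module R C] [Coalgebra R C] {c : C} (r : Repr R c ι) :
    ∑ i ∈ r.index, counit (R := R) (r.right i) • r.left i = c := by
  simpa only [map_sum, rid_tmul, one_smul] using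
    congrArg (_root_.TensorProduct.rid R C) (sum_tmul_counit_eq r)

namespace HopfAlgebra

variable {R A : Type*} [CommSemiring R] [Semiring A] [HopfAlgebra R A]

lemma toConv_algHom_comp_antipode_mul {B : Type*} [Semiring B] [Algebra R B] (f : A →ₐ[R] B) :
    toConv (f.toLinearMap ∘ₗ antipode R) * toConv f.toLinearMap = 1 := by
  ext a
  rw [(ℛ R a).convMul_apply]
  simp [← map_mul, ← map_sum, sum_antipode_mul_eq_algebraMap_counit]

open Algebra.TensorProduct in
lemma toConv_includeLeft_mul_includeRight :
    toConv (includeLeft : A →ₐ[R] A ⊗[R] A).toLinearMap * toConv includeRight.toLinearMap =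
      toConv (comul (R := R) (A := A)) := by
  ext a
  rw [(ℛ R a).convMul_apply]
  simp [(ℛ R a).eq]

open Algebra.TensorProduct in
lemma toConv_includeRight_comp_antipode_mul_includeLeft_comp_antipode :
    toConv ((includeRight : A →ₐ[R] A ⊗[R] A).toLinearMap ∘ₗ antipode R) *
        toConv (includeLeft.toLinearMap ∘ₗ antipode R) =
      toConv (map (antipode R) (antipode R) ∘ₗ (TensorProduct.comm R A A).toLinearMap ∘ₗ
        comul (R := R) (A := A)) := by
  ext a
  rw [(ℛ R a).convMul_apply]
  simp [← (ℛ R a).eq]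

/-- Writing `(S ⊗ S) ∘ τ ∘ Δ = (1 ⊗ S) ⋆ (S ⊗ 1)` and `Δ = (· ⊗ 1) ⋆ (1 ⊗ ·)`, the two middle
factors cancel first, then the outer ones. -/
lemma toConv_map_antipode_comp_comm_comp_comul_mul_comul :
    toConv (map (antipode R) (antipode R) ∘ₗ (TensorProduct.comm R A A).toLinearMap ∘ₗ
        comul (R := R) (A := A)) * toConv comul = 1 := by
  rw [← toConv_includeRight_comp_antipode_mul_includeLeft_comp_antipode,
    ← toConv_includeLeft_mul_includeRight, mul_assoc,
    ← mul_assoc (toConv (Algebra.TensorProduct.includeLeft.toLinearMap ∘ₗ antipode R)),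
    toConv_algHom_comp_antipode_mul, one_mul, toConv_algHom_comp_antipode_mul]

theorem comul_comp_antipode :
    comul ∘ₗ antipode R =
      map (antipode R) (antipode R) ∘ₗ (TensorProduct.comm R A A).toLinearMap ∘ₗ
        comul (R := R) (A := A) :=
  congrArg ofConv (left_inv_eq_right_inv toConv_map_antipode_comp_comm_comp_comul_mul_comul
    LinearMap.comul_right_inv).symm

lemma comul_antipode_eq_sum {ι : Type*} {a : A} (r : Repr R a ι) :
    comul (R := R) (antipode R a) =
      ∑ i ∈ r.index, antipode R (r.right i) ⊗ₜ antipode R (r.left i) := by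
  simp [← LinearMap.comp_apply, comul_comp_antipode, ← r.eq]

lemma sum_antipode_right_mul_left_eq_algebraMap_counit
    (hS : Function.Involutive (antipode R (A := A))) {ι : Type*} {a : A} (r : Repr R a ι) :
    ∑ i ∈ r.index, antipode R (r.right i) * r.left i = algebraMap R A (counit (R := R) a) := by
  have := congrArg (antipode R) (sum_antipode_mul_eq_algebraMap_counit r)
  simpa [antipode_mul_antidistrib, hS _, Algebra.algebraMap_eq_smul_one] using this

section Fusion

variable {V : Type*} [AddCommMonoid V] [Module R V]

noncomputable def fusionRight (f : A →ₗ[R] Module.End R V) : A ⊗[R] V →ₗ[R] A ⊗[R] V :=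
  LinearMap.lTensor A (lift f) ∘ₗ (TensorProduct.assoc R A A V).toLinearMap ∘ₗ
    LinearMap.rTensor V comul

noncomputable def fusionLeft (f : A →ₗ[R] Module.End R V) : V ⊗[R] A →ₗ[R] V ⊗[R] A :=
  LinearMap.rTensor A (lift f ∘ₗ (TensorProduct.comm R V A).toLinearMap) ∘ₗ
    (TensorProduct.assoc R V A A).symm.toLinearMap ∘ₗ LinearMap.lTensor V comul

lemma fusionRight_tmul {f : A →ₗ[R] Module.End R V} {ι : Type*} {a : A} (r : Repr R a ι)
    (v : V) : fusionRight f (a ⊗ₜ v) = ∑ i ∈ r.index, r.left i ⊗ₜ f (r.right i) v := by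
  simp [fusionRight, ← r.eq, sum_tmul]

lemma fusionLeft_tmul {f : A →ₗ[R] Module.End R V} {ι : Type*} {a : A} (r : Repr R a ι)
    (v : V) : fusionLeft f (v ⊗ₜ a) = ∑ i ∈ r.index, f (r.left i) v ⊗ₜ r.right i := by
  simp [fusionLeft, ← r.eq, tmul_sum]

lemma fusionRight_antipode_comp_fusionRight (π : A →ₐ[R] Module.End R V) :
    fusionRight (π.toLinearMap ∘ₗ antipode R) ∘ₗ fusionRight π.toLinearMap = LinearMap.id := by
  refine TensorProduct.ext' fun a v ↦ ?_
  let r := ℛ R a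
  let s i := ℛ R (r.left i)
  let t i := ℛ R (r.right i)
  have hcoassoc : ∑ i ∈ r.index, ∑ j ∈ (s i).index,
        (s i).left j ⊗ₜ[R] π (antipode R ((s i).right j)) (π (r.right i) v) =
      ∑ i ∈ r.index, ∑ j ∈ (t i).index,
        r.left i ⊗ₜ[R] π (antipode R ((t i).left j)) (π ((t i).right j) v) := by
    simpa using congrArg (LinearMap.lTensor A (LinearMap.applyₗ v ∘ₗ
      LinearMap.mul' R (Module.End R V) ∘ₗ map (π.toLinearMap ∘ₗ antipode R) π.toLinearMap))
      (sum_tmul_tmul_eq r s t)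
  have hantipode (i) : ∑ j ∈ (t i).index, π (antipode R ((t i).left j)) (π ((t i).right j) v) =
      counit (R := R) (r.right i) • v := by
    simp [← map_mul, ← Module.End.mul_apply, ← LinearMap.sum_apply, ← map_sum,
      sum_antipode_mul_eq_algebraMap_counit]
  rw [LinearMap.comp_apply, fusionRight_tmul r, map_sum,
    Finset.sum_congr rfl fun i _ ↦ fusionRight_tmul (s i) _]
  simp_rw [LinearMap.comp_apply, AlgHom.toLinearMap_apply, hcoassoc, ← tmul_sum, hantipode]
  simp_rw [tmul_smul, smul_tmul', ← sum_tmul, sum_counit_right_smul, LinearMap.id_apply]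

lemma fusionLeft_antipode_comp_fusionLeft (hS : Function.Involutive (antipode R (A := A)))
    (π : A →ₐ[R] Module.End R V) :
    fusionLeft (π.toLinearMap ∘ₗ antipode R) ∘ₗ fusionLeft π.toLinearMap = LinearMap.id := by
  refine TensorProduct.ext' fun v a ↦ ?_
  let r := ℛ R a
  let s i := ℛ R (r.left i)
  let t i := ℛ R (r.right i)
  have hcoassoc : ∑ i ∈ r.index, ∑ j ∈ (s i).index,
        π (antipode R ((s i).right j)) (π ((s i).left j) v) ⊗ₜ[R] r.right i =
      ∑ i ∈ r.index, ∑ j ∈ (t i).index,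
        π (antipode R ((t i).left j)) (π (r.left i) v) ⊗ₜ[R] (t i).right j := by
    simpa using congrArg (LinearMap.rTensor A (LinearMap.applyₗ v ∘ₗ
      LinearMap.mul' R (Module.End R V) ∘ₗ map (π.toLinearMap ∘ₗ antipode R) π.toLinearMap ∘ₗ
        (TensorProduct.comm R A A).toLinearMap) ∘ₗ (TensorProduct.assoc R A A A).symm.toLinearMap)
      (sum_tmul_tmul_eq r s t)
  have hantipode (i) : ∑ j ∈ (s i).index, π (antipode R ((s i).right j)) (π ((s i).left j) v) =
      counit (R := R) (r.left i) • v := by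
    simp [← map_mul, ← Module.End.mul_apply, ← LinearMap.sum_apply, ← map_sum,
      sum_antipode_right_mul_left_eq_algebraMap_counit hS]
  rw [LinearMap.comp_apply, fusionLeft_tmul r, map_sum,
    Finset.sum_congr rfl fun i _ ↦ fusionLeft_tmul (t i) _]
  simp_rw [LinearMap.comp_apply, AlgHom.toLinearMap_apply, ← hcoassoc, ← sum_tmul, hantipode]
  simp_rw [smul_tmul, ← tmul_sum, sum_counit_smul, LinearMap.id_apply]

end Fusion

end HopfAlgebra

section Residual

variable {A V : Type*} [Ring A] [HopfAlgebra ℂ A] [AddCommGroup V] [Module ℂ V]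
  (π : A →ₐ[ℂ] Module.End ℂ V) (φ₀ : V)

lemma mem_rightResidual_iff {a : A} :
    a ∈ rightResidual π φ₀ ↔ fusionRight π.toLinearMap (a ⊗ₜ φ₀) = a ⊗ₜ φ₀ := by
  simp [rightResidual, fusionRight_tmul (ℛ ℂ a), ← (ℛ ℂ a).eq, actOn]

lemma mem_leftResidual_iff {a : A} :
    a ∈ leftResidual π φ₀ ↔ fusionLeft π.toLinearMap (φ₀ ⊗ₜ a) = φ₀ ⊗ₜ a := by
  simp [leftResidual, fusionLeft_tmul (ℛ ℂ a), ← (ℛ ℂ a).eq, actOn]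

theorem antipode_mem_leftResidual {a : A} (ha : a ∈ rightResidual π φ₀) :
    antipode ℂ a ∈ leftResidual π φ₀ := by
  have hfix := LinearMap.congr_fun (fusionRight_antipode_comp_fusionRight π) (a ⊗ₜ φ₀)
  rw [LinearMap.comp_apply, (mem_rightResidual_iff π φ₀).1 ha, fusionRight_tmul (ℛ ℂ a)] at hfix
  simpa [leftResidual, comul_antipode_eq_sum (ℛ ℂ a), map_sum, actOn] using
    congrArg ((TensorProduct.comm ℂ A V).toLinearMap ∘ₗ LinearMap.rTensor V (antipode ℂ)) hfix

theorem antipode_mem_rightResidual (hS : Function.Involutive (antipode ℂ (A := A))) {a : A}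
    (ha : a ∈ leftResidual π φ₀) : antipode ℂ a ∈ rightResidual π φ₀ := by
  have hfix := LinearMap.congr_fun (fusionLeft_antipode_comp_fusionLeft hS π) (φ₀ ⊗ₜ a)
  rw [LinearMap.comp_apply, (mem_leftResidual_iff π φ₀).1 ha, fusionLeft_tmul (ℛ ℂ a)] at hfix
  simpa [rightResidual, comul_antipode_eq_sum (ℛ ℂ a), map_sum, actOn] using
    congrArg ((TensorProduct.comm ℂ V A).toLinearMap ∘ₗ LinearMap.lTensor V (antipode ℂ)) hfix

end Residual

theorem stmt4_general {A V : Type*} [Ring A] [HopfAlgebra ℂ A]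
    [AddCommGroup V] [Module ℂ V]
    (hS : ∀ a : A, HopfAlgebra.antipode (R := ℂ) (HopfAlgebra.antipode (R := ℂ) a) = a)
    (π : A →ₐ[ℂ] Module.End ℂ V) (φ₀ : V) :
    HopfAlgebra.antipode (R := ℂ) '' leftResidual π φ₀ = rightResidual π φ₀ ∧
    HopfAlgebra.antipode (R := ℂ) '' rightResidual π φ₀ = leftResidual π φ₀ := by
  have hS : Function.Involutive (HopfAlgebra.antipode ℂ (A := A)) := hS
  have hLR : Set.MapsTo (HopfAlgebra.antipode ℂ) (leftResidual π φ₀) (rightResidual π φ₀) :=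
    fun _ ↦ antipode_mem_rightResidual π φ₀ hS
  have hRL : Set.MapsTo (HopfAlgebra.antipode ℂ) (rightResidual π φ₀) (leftResidual π φ₀) :=
    fun _ ↦ antipode_mem_leftResidual π φ₀
  exact ⟨((hS.leftInverse.leftInvOn _).surjOn hRL).image_eq_of_mapsTo hLR,
    ((hS.leftInverse.leftInvOn _).surjOn hLR).image_eq_of_mapsTo hRL⟩

/-- for a finite-dimensional Hopf algebra with `S² = id`,
the antipode exchanges the left and right residual symmetry algebras. -/
theorem stmt4 {A V : Type*} [Ring A] [HopfAlgebra ℂ A] [FiniteDimensional ℂ A]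
    [AddCommGroup V] [Module ℂ V]
    (hS : ∀ a : A, HopfAlgebra.antipode (R := ℂ) (HopfAlgebra.antipode (R := ℂ) a) = a)
    (π : A →ₐ[ℂ] Module.End ℂ V) (φ₀ : V) :
    HopfAlgebra.antipode (R := ℂ) '' leftResidual π φ₀ = rightResidual π φ₀ ∧
    HopfAlgebra.antipode (R := ℂ) '' rightResidual π φ₀ = leftResidual π φ₀ :=
  stmt4_general hS π φ₀
end

section
/- In the quantum double D(H) of a finite group H, the element R = Σ_{g ∈ H} (P_g e) ⊗ (Σ_{h} P_h g) of D(H) ⊗ D(H) satisfies the quasitriangularity condition R Δ(a) = Δᵒᵖ(a) R for all a ∈ D(H), where Δᵒᵖ = τ ∘ Δ. -/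
open scoped Classical

/-- The underlying vector space of the quantum double `D(H)`: functions `H × H → ℂ`,
with `P_h g` corresponding to the indicator of `(h, g)`. -/
abbrev DH (H : Type*) : Type _ := H × H → ℂ

/-- The tensor square `D(H) ⊗ D(H)`, realized as functions `(H × H) × (H × H) → ℂ`. -/
abbrev DH2 (H : Type*) : Type _ := (H × H) × (H × H) → ℂ

/-- The basis element `P_h g` of `D(H)`. -/
noncomputable def Pg {H : Type*} (h g : H) : DH H :=
  fun p => (if p.1 = h then 1 else 0) * (if p.2 = g then 1 else 0)

/-- The pure tensor `f ⊗ g` in `D(H) ⊗ D(H)`. -/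
noncomputable def tens {H : Type*} (f g : DH H) : DH2 H := fun q => f q.1 * g q.2

/-- A linear map applied to a finite sum. -/
lemma lin_sum {M N : Type*} [AddCommMonoid M] [Module ℂ M] [AddCommMonoid N] [Module ℂ N]
    {f : M → N} (hf : IsLinearMap ℂ f) {ι : Type*} (s : Finset ι) (g : ι → M) :
    f (∑ i ∈ s, g i) = ∑ i ∈ s, f (g i) := by
  exact map_sum (IsLinearMap.mk' f hf) g s

lemma tens_ite {H : Type*} (c : Prop) [Decidable c] (A B : DH H) :
    tens (if c then A else (0 : DH H)) B = if c then tens A B else 0 := by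
  split
  · rfl
  · funext q; simp [tens]

lemma tens_zero_right {H : Type*} (A : DH H) : tens A (0 : DH H) = 0 := by
  funext q; simp [tens]

/-- the element `R = ∑_g (P_g e) ⊗ g` (with `g = ∑_h P_h g`) of
`D(H) ⊗ D(H)` satisfies the quasitriangularity condition `R Δ(a) = Δᵒᵖ(a) R`, where
`Δᵒᵖ = τ ∘ Δ` with `τ` the flip. -/
theorem stmt12 {H : Type*} [Group H] [Fintype H]
    (m : DH H → DH H → DH H)
    (hmr : ∀ a : DH H, IsLinearMap ℂ (m a))
    (hml : ∀ b : DH H, IsLinearMap ℂ (fun a => m a b))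
    (hbasis : ∀ h g h' g' : H,
      m (Pg h g) (Pg h' g') = if h = g * h' * g⁻¹ then Pg h (g * g') else 0)
    (m₂ : DH2 H → DH2 H → DH2 H)
    (hm₂r : ∀ F : DH2 H, IsLinearMap ℂ (m₂ F))
    (hm₂l : ∀ G : DH2 H, IsLinearMap ℂ (fun F => m₂ F G))
    (hm₂tens : ∀ a b c d : DH H, m₂ (tens a b) (tens c d) = tens (m a c) (m b d))
    (Δ : DH H → DH2 H) (hΔlin : IsLinearMap ℂ Δ)
    (hΔbasis : ∀ h g : H, Δ (Pg h g) = ∑ h' : H, tens (Pg (h * h'⁻¹) g) (Pg h' g)) :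
    ∀ a : DH H,
      m₂ (∑ g : H, tens (Pg g 1) (∑ h : H, Pg h g)) (Δ a) =
      m₂ (fun q => Δ a (q.2, q.1)) (∑ g : H, tens (Pg g 1) (∑ h : H, Pg h g)) := by
  classical
  set R : DH2 H := ∑ g : H, tens (Pg g 1) (∑ h : H, Pg h g) with hR
  -- key basis computation
  have key : ∀ h g : H,
      m₂ R (Δ (Pg h g)) = m₂ (fun q => Δ (Pg h g) (q.2, q.1)) R := by
    intro h g
    -- flip of the coproduct
    have hflip : (fun q : (H × H) × (H × H) => Δ (Pg h g) (q.2, q.1))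
        = ∑ h' : H, tens (Pg h' g) (Pg (h * h'⁻¹) g) := by
      funext q
      rw [hΔbasis]
      simp [Finset.sum_apply, tens, mul_comm]
    -- each term of the left-hand side
    have lhs_eq : ∀ h' : H, m₂ R (tens (Pg (h * h'⁻¹) g) (Pg h' g))
        = tens (Pg (h * h'⁻¹) g)
            (Pg ((h * h'⁻¹) * h' * (h * h'⁻¹)⁻¹) ((h * h'⁻¹) * g)) := by
      intro h'
      have hm2 : ∀ k : H, m (∑ t : H, Pg t k) (Pg h' g) = Pg (k * h' * k⁻¹) (k * g) := by
        intro k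
        rw [lin_sum (hml (Pg h' g))]
        rw [Finset.sum_congr rfl fun t _ => hbasis t k h' g]
        simp
      rw [hR, lin_sum (hm₂l (tens (Pg (h * h'⁻¹) g) (Pg h' g)))]
      rw [Finset.sum_congr rfl fun k _ => by
        rw [hm₂tens, hm2 k, hbasis, tens_ite]]
      simp
    -- each term of the right-hand side
    have rhs_eq : ∀ h' : H, m₂ (tens (Pg h' g) (Pg (h * h'⁻¹) g)) R
        = tens (Pg h' g) (Pg (h * h'⁻¹) (h' * g)) := by
      intro h'
      have hm2 : ∀ k : H, m (Pg (h * h'⁻¹) g) (∑ t : H, Pg t k)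
          = Pg (h * h'⁻¹) (g * k) := by
        intro k
        rw [lin_sum (hmr (Pg (h * h'⁻¹) g))]
        rw [Finset.sum_congr rfl fun t _ => hbasis (h * h'⁻¹) g t k]
        have hcond : ∀ t : H, (h * h'⁻¹ = g * t * g⁻¹) = (t = g⁻¹ * (h * h'⁻¹) * g) := by
          intro t
          apply propext
          constructor <;> intro e <;> rw [e] <;> group
        rw [Finset.sum_congr rfl fun t _ => by rw [hcond t]]
        simp
      rw [hR, lin_sum (hm₂r (tens (Pg h' g) (Pg (h * h'⁻¹) g)))]
      rw [Finset.sum_congr rfl fun k _ => by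
        rw [hm₂tens, hm2 k, hbasis, tens_ite]]
      have hcond : ∀ k : H, (h' = g * k * g⁻¹) = (k = g⁻¹ * h' * g) := by
        intro k
        apply propext
        constructor <;> intro e <;> rw [e] <;> group
      rw [Finset.sum_congr rfl fun k _ => by rw [hcond k]]
      rw [Fintype.sum_ite_eq']
      have e1 : g * (g⁻¹ * h' * g) = h' * g := by group
      rw [mul_one, e1]
    rw [hflip, hΔbasis, lin_sum (hm₂r R), lin_sum (hm₂l R)]
    rw [Finset.sum_congr rfl fun h' _ => lhs_eq h',
        Finset.sum_congr rfl fun h' _ => rhs_eq h']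
    -- reindex by h' ↦ h * h'⁻¹
    refine Fintype.sum_equiv
      ⟨fun x => h * x⁻¹, fun x => (h⁻¹ * x)⁻¹, fun x => by group, fun x => by group⟩
      _ _ (fun h' => ?_)
    simp only [Equiv.coe_fn_mk]
    have e1 : (h * h'⁻¹) * h' * (h * h'⁻¹)⁻¹ = h * (h * h'⁻¹)⁻¹ := by group
    rw [e1]
  -- expand a in the basis
  intro a
  have ha : a = ∑ p : H × H, a p • Pg p.1 p.2 := by
    funext q
    rw [Finset.sum_apply]
    rw [Finset.sum_eq_single q]
    · simp [Pg]
    · intro b _ hbq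
      by_cases h1 : q.1 = b.1 <;> by_cases h2 : q.2 = b.2 <;>
        simp [Pg, h1, h2]
      exact absurd (Prod.ext h1.symm h2.symm) (by simpa [eq_comm] using hbq)
    · intro hq; exact absurd (Finset.mem_univ q) hq
  have L : m₂ R (Δ a) = ∑ p : H × H, a p • m₂ R (Δ (Pg p.1 p.2)) := by
    conv_lhs => rw [ha]
    rw [lin_sum hΔlin, lin_sum (hm₂r R)]
    exact Finset.sum_congr rfl fun p _ => by
      rw [hΔlin.map_smul, (hm₂r R).map_smul]
  have Rside : m₂ (fun q => Δ a (q.2, q.1)) R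
      = ∑ p : H × H, a p • m₂ (fun q => Δ (Pg p.1 p.2) (q.2, q.1)) R := by
    have hflipa : (fun q : (H × H) × (H × H) => Δ a (q.2, q.1))
        = ∑ p : H × H, a p • (fun q : (H × H) × (H × H) => Δ (Pg p.1 p.2) (q.2, q.1)) := by
      funext q
      conv_lhs => rw [ha]
      rw [lin_sum hΔlin, Finset.sum_apply]
      rw [Finset.sum_apply]
      exact Finset.sum_congr rfl fun p _ => by
        rw [hΔlin.map_smul]; rfl
    rw [hflipa, lin_sum (hm₂l R)]
    exact Finset.sum_congr rfl fun p _ => by rw [(hm₂l R).map_smul]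
  rw [L, Rside]
  exact Finset.sum_congr rfl fun p _ => by rw [key p.1 p.2]
end

section
/- Let H be a finite group and g_A ∈ H. In D(H), the right residual symmetry algebra of the single-defect condensate |g_A⟩ in the magnetic representation Π^A_1 (A the conjugacy class of g_A, trivial centralizer representation) is spanned by {P_{h⟨g_A⟩} n : h ∈ H, n ∈ N_A}, i.e. T_r = F(H/⟨g_A⟩) ⊗ ℂ N_A, where ⟨g_A⟩ is the cyclic subgroup generated by g_A, N_A is the centralizer of g_A, and P_{h⟨g_A⟩} = Σ_{k ∈ h⟨g_A⟩} P_k. -/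
/-!
Evaluating `(id ⊗ Π)(Δ a)(1 ⊗ |g⟩)` gives `a(x k, y) δ_{y⁻¹ k y, g}`, so `a ∈ T_r` exactly when
`a(·, y)` vanishes for `y` outside the centralizer of `g` and is invariant under right
multiplication by `g`, hence by `⟨g⟩`. Such an `a` is the average
`|⟨g⟩|⁻¹ ∑_{h,n} a(h, n) P_{h⟨g⟩} n` of coset indicators, which span the same space.
-/

open scoped Classical

/-- The coproduct of `D(H)` in function form:
`Δ(f)(x₁,y₁; x₂,y₂) = f(x₁x₂, y₁) δ_{y₁}(y₂)`. -/
noncomputable def dComul {H : Type*} [Group H] (a : DH H) : (H × H) × (H × H) → ℂ :=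
  fun q => a (q.1.1 * q.2.1, q.1.2) * (if q.2.2 = q.1.2 then 1 else 0)

/-- The action of the basis element `P_{x₂} y₂` of `D(H)` on a vector `φ` of a magnetic
representation (coefficients indexed by group elements):
`Π(P_h g)|g_i⟩ = δ_{h, g g_i g⁻¹} |g g_i g⁻¹⟩`. -/
noncomputable def magAct {H : Type*} [Group H] (x₂ y₂ : H) (φ : H → ℂ) : H → ℂ :=
  fun k => (if k = x₂ then 1 else 0) * φ (y₂⁻¹ * k * y₂)

/-- Applying `(id ⊗ Π(·)φ)` to an element of `D(H) ⊗ D(H)` (in function form), landing in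
`D(H) ⊗ V`, realized as functions `(H × H) × H → ℂ`. -/
noncomputable def applySecond {H : Type*} [Group H] [Fintype H]
    (F : (H × H) × (H × H) → ℂ) (φ : H → ℂ) : (H × H) × H → ℂ :=
  fun pk => ∑ x₂ : H, ∑ y₂ : H, F (pk.1, (x₂, y₂)) * magAct x₂ y₂ φ pk.2

section Averaging

variable {H : Type*} [Group H]

theorem forall_mul_zpow_eq {α : Type*} {f : H → α} {g : H} (hf : ∀ x, f (x * g) = f x)
    (m : ℤ) (x : H) : f (x * g ^ m) = f x := by
  induction m using Int.induction_on generalizing x with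
  | zero => simp
  | succ i ih => rw [zpow_add_one, ← mul_assoc, hf, ih]
  | pred i ih =>
    rw [← ih x, ← hf (x * g ^ (-(i : ℤ) - 1)), mul_assoc, ← zpow_add_one, sub_add_cancel]

theorem sum_ite_inv_mul_mem_eq_card_smul [Fintype H] {M : Type*} [AddCommMonoid M]
    (K : Subgroup H) {f : H → M} (hf : ∀ k ∈ K, ∀ x, f (x * k) = f x) (x : H) :
    (∑ h : H, if h⁻¹ * x ∈ K then f h else 0) = Fintype.card K • f x := by
  calc (∑ h : H, if h⁻¹ * x ∈ K then f h else 0)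
      = ∑ k : H, if k ∈ K then f x else 0 :=
        Fintype.sum_equiv ((Equiv.inv H).trans (Equiv.mulRight x)) _ _ fun h => by
          by_cases hh : h⁻¹ * x ∈ K
          · simpa [hh] using (hf _ hh h).symm
          · simp [hh]
    _ = Fintype.card K • f x := by
        rw [← Finset.sum_filter, Finset.sum_const, Fintype.card_subtype]

end Averaging

section CosetDelta

variable {H : Type*} [Group H]

/-- `P_{hK} n = ∑_{k ∈ hK} P_k n`, as a function on `H × H`. -/
noncomputable def cosetDelta (K : Subgroup H) (h n : H) : DH H :=
  fun p => (if h⁻¹ * p.1 ∈ K then 1 else 0) * (if p.2 = n then 1 else 0)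

/-- For `K = ⟨g_A⟩` and `N = N_A` this is `F(H/⟨g_A⟩) ⊗ ℂ N_A`. -/
def invariantSupported (K : Subgroup H) (N : Set H) : Submodule ℂ (DH H) where
  carrier := {a | (∀ k ∈ K, ∀ x y, a (x * k, y) = a (x, y)) ∧ ∀ x, ∀ y ∉ N, a (x, y) = 0}
  zero_mem' := by simp
  add_mem' ha hb :=
    ⟨fun k hk x y => by simp [ha.1 k hk, hb.1 k hk],
      fun x y hy => by simp [ha.2 x y hy, hb.2 x y hy]⟩
  smul_mem' c a ha :=
    ⟨fun k hk x y => by simp [ha.1 k hk], fun x y hy => by simp [ha.2 x y hy]⟩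

theorem cosetDelta_mem_invariantSupported (K : Subgroup H) {N : Set H} (h : H) {n : H}
    (hn : n ∈ N) : cosetDelta K h n ∈ invariantSupported K N := by
  refine ⟨fun k hk x y => ?_, fun x y hy => ?_⟩
  · simp only [cosetDelta, ← mul_assoc, K.mul_mem_cancel_right hk]
  · simp [cosetDelta, show y ≠ n from fun h => hy (h ▸ hn)]

theorem sum_smul_cosetDelta_apply [Fintype H] (K : Subgroup H) (a : DH H) (p : H × H) :
    (∑ h : H, ∑ n : H, a (h, n) • cosetDelta K h n) p =
      ∑ h : H, if h⁻¹ * p.1 ∈ K then a (h, p.2) else 0 := by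
  simp [cosetDelta, Finset.sum_apply, mul_ite]

theorem span_cosetDelta_eq [Fintype H] (K : Subgroup H) (N : Set H) :
    Submodule.span ℂ {f | ∃ h n : H, n ∈ N ∧ f = cosetDelta K h n} =
      invariantSupported K N := by
  refine le_antisymm (Submodule.span_le.mpr ?_) fun a ha => ?_
  · rintro _ ⟨h, n, hn, rfl⟩
    exact cosetDelta_mem_invariantSupported K h hn
  have hK : (Fintype.card K : ℂ) ≠ 0 := Nat.cast_ne_zero.mpr Fintype.card_ne_zero
  have hexpand :
      a = (Fintype.card K : ℂ)⁻¹ • ∑ h : H, ∑ n : H, a (h, n) • cosetDelta K h n := by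
    funext p
    rw [Pi.smul_apply, sum_smul_cosetDelta_apply,
      sum_ite_inv_mul_mem_eq_card_smul K (fun k hk x => ha.1 k hk x p.2), nsmul_eq_mul,
      smul_eq_mul, inv_mul_cancel_left₀ hK]
  rw [hexpand]
  refine Submodule.smul_mem _ _ (Submodule.sum_mem _ fun h _ => Submodule.sum_mem _ fun n _ => ?_)
  by_cases hn : n ∈ N
  · exact Submodule.smul_mem _ _ (Submodule.subset_span ⟨h, n, hn, rfl⟩)
  · simp [ha.2 h n hn]

end CosetDelta

section Condensate

variable {H : Type*} [Group H]

theorem applySecond_dComul_delta [Fintype H] (g : H) (a : DH H) :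
    applySecond (dComul a) (fun k => if k = g then 1 else 0) =
      fun pk => a (pk.1.1 * pk.2, pk.1.2) * (if pk.1.2⁻¹ * pk.2 * pk.1.2 = g then 1 else 0) := by
  funext pk
  simp only [applySecond, dComul, magAct]
  rw [Finset.sum_eq_single pk.2 (fun x _ hx => by simp [Ne.symm hx]) (by simp),
    Finset.sum_eq_single pk.1.2 (fun y _ hy => by simp [hy]) (by simp)]
  simp

theorem conj_eq_self_iff_mem_centralizer {g y : H} :
    y⁻¹ * g * y = g ↔ y ∈ Subgroup.centralizer {g} := by
  rw [Subgroup.mem_centralizer_singleton_iff, mul_assoc, inv_mul_eq_iff_eq_mul, eq_comm]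

theorem conj_eq_iff_of_mem_centralizer {g y : H} (hy : y ∈ Subgroup.centralizer {g}) (k : H) :
    y⁻¹ * k * y = g ↔ k = g := by
  nth_rewrite 1 [← conj_eq_self_iff_mem_centralizer.mpr hy]
  rw [mul_left_inj, mul_right_inj]

/-- The right residual symmetry condition for the condensate `|g⟩`, written pointwise. -/
theorem residual_iff_mem_invariantSupported [Fintype H] (g : H) (a : DH H) :
    (∀ x y k : H, a (x * k, y) * (if y⁻¹ * k * y = g then 1 else 0) =
        a (x, y) * (if k = g then 1 else 0)) ↔
      a ∈ invariantSupported (Subgroup.zpowers g) (Subgroup.centralizer {g}) := by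
  constructor
  · intro ha
    have hsupp : ∀ x, ∀ y ∉ Subgroup.centralizer {g}, a (x, y) = 0 := fun x y hy => by
      simpa [conj_eq_self_iff_mem_centralizer, hy] using (ha x y g).symm
    refine ⟨?_, hsupp⟩
    rintro _ ⟨m, rfl⟩ x y
    refine forall_mul_zpow_eq (f := fun x => a (x, y)) (fun x => ?_) m x
    by_cases hy : y ∈ Subgroup.centralizer {g}
    · simpa [conj_eq_self_iff_mem_centralizer, hy] using ha x y g
    · simp [hsupp _ y hy]
  · rintro ⟨hinv, hsupp⟩ x y k
    by_cases hy : y ∈ Subgroup.centralizer {g}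
    · rw [conj_eq_iff_of_mem_centralizer hy]
      split_ifs with hk
      · rw [hk, hinv g (Subgroup.mem_zpowers g)]
      · simp only [mul_zero]
    · simp [hsupp _ y hy]

end Condensate

/-- the right residual symmetry algebra of the single-defect condensate
`|g_A⟩` in the magnetic representation `Π^A_1` of `D(H)` equals
`F(H/⟨g_A⟩) ⊗ ℂ N_A`: the span of the elements `P_{h⟨g_A⟩} n` with `h ∈ H` and
`n` in the centralizer of `g_A`. -/
theorem stmt16 {H : Type*} [Group H] [Fintype H] (gA : H) :
    {a : DH H |
        applySecond (dComul a) (fun k => if k = gA then 1 else 0) =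
          fun pk => a pk.1 * (if pk.2 = gA then 1 else 0)} =
      ↑(Submodule.span ℂ
        {f : DH H | ∃ h n : H, n ∈ Subgroup.centralizer ({gA} : Set H) ∧
          f = fun p =>
            (if h⁻¹ * p.1 ∈ Subgroup.zpowers gA then 1 else 0) *
            (if p.2 = n then (1 : ℂ) else 0)}) := by
  ext a
  rw [Set.mem_ofPred_eq, applySecond_dComul_delta, funext_iff, Prod.forall, Prod.forall]
  exact (residual_iff_mem_invariantSupported gA a).trans
    (SetLike.ext_iff.mp (span_cosetDelta_eq _ _) a).symm
end
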